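/- arXiv:0911.2856 — 3 statements merged into one kernel-verified Lean document; each statement's English description precedes it below -/
import Mathlib

section
/- Let J be a bounded operator on ℓ²(ℕ) whose Lax-pair evolution satisfies J̇ = J J_- − J_- J, where J_- is the strictly lower part of J (a four-banded matrix as in the Kostant-Toda setting). Then for every n ∈ ℕ, the leading 2×2 block satisfies d/dt (J^n)_{11} = (J^n)_{11} (J_-)_{11} − (J_-)_{11} (J^n)_{11} + (J^n)_{12} (J_-)_{21}, where M_{ij} denotes the 2×2 block of M formed by rows 2i−1, 2i and columns 2j−1, 2j. -/
open Finset

noncomputable section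

/-- The infinite four-banded matrix `J(t)`. -/
def Jmat (a b c : ℕ → ℝ → ℂ) (t : ℝ) (i j : ℕ) : ℂ :=
  if i = j then a (i + 1) t
  else if j = i + 1 then 1
  else if i = j + 1 then b (j + 1) t
  else if i = j + 2 then c (j + 1) t
  else 0

/-- The strictly lower part `J_-` of `J`. -/
def Jminus (b c : ℕ → ℝ → ℂ) (t : ℝ) (i j : ℕ) : ℂ :=
  if i = j + 1 then b (j + 1) t
  else if i = j + 2 then c (j + 1) t
  else 0

/-- Product of banded infinite matrices; for `M` with nonzero entries of row `i` in
columns `≤ i + 2`, this is the genuine matrix product. -/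
def bmul (M N : ℕ → ℕ → ℂ) (i j : ℕ) : ℂ :=
  ∑ k ∈ Finset.range (max i j + 3), M i k * N k j

/-- The `n`-th power of `J`.  Since row `i` of `J` has its nonzero entries in columns
`≤ i + 1`, the finite sum below is the genuine matrix product `J · J^n`. -/
def Jpow (a b c : ℕ → ℝ → ℂ) (t : ℝ) : ℕ → ℕ → ℕ → ℂ
  | 0 => fun i j => if i = j then 1 else 0
  | n + 1 => fun i j => ∑ k ∈ Finset.range (i + 2), Jmat a b c t i k * Jpow a b c t n k j

/-- The 2×2 block of an infinite matrix with (0-based) block position `(p,q)`, i.e. the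
rows `2p+1, 2p+2` and columns `2q+1, 2q+2` in 1-based numbering. -/
def blk (M : ℕ → ℕ → ℂ) (p q : ℕ) : Matrix (Fin 2) (Fin 2) ℂ :=
  Matrix.of fun r s : Fin 2 => M (2 * p + (r : ℕ)) (2 * q + (s : ℕ))

/-!
Writing `J^{n+1} = J J^n` and differentiating, the Lax equation for `J` and (inductively) for `J^n`
give `(J^n)' = J^n J_- - J_- J^n` entrywise, because
`(J J_- - J_- J) J^n + J (J^n J_- - J_- J^n) = J^{n+1} J_- - J_- J^{n+1}`.
All sums involved are finite by the band structure, so each entry can be computed inside a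
large enough finite corner, where this identity is ring arithmetic in `Matrix (Fin R) (Fin R) ℂ`.
For the leading block, `(J_-)₁₂ = 0`, so the `(1,1)` block of `J^n J_- - J_- J^n` is
`(J^n)₁₁ (J_-)₁₁ + (J^n)₁₂ (J_-)₂₁ - (J_-)₁₁ (J^n)₁₁`.
-/

def corner (R : ℕ) (M : ℕ → ℕ → ℂ) : Matrix (Fin R) (Fin R) ℂ :=
  Matrix.of fun x y => M x y

lemma corner_mul_apply {R : ℕ} (M N : ℕ → ℕ → ℂ) (x y : Fin R) :
    (corner R M * corner R N) x y = ∑ k ∈ range R, M x k * N k y := by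
  simp only [corner, Matrix.mul_apply, Matrix.of_apply]
  exact Fin.sum_univ_eq_sum_range (fun k => M x k * N k y) R

lemma bmul_eq_corner_mul_apply {M N : ℕ → ℕ → ℂ} {R : ℕ} (m : ℕ) {x y : Fin R}
    (h : ∀ k ≥ m, M x k * N k y = 0) (hm : m ≤ max (x : ℕ) y + 3) (hR : m ≤ R) :
    bmul M N x y = (corner R M * corner R N) x y := by
  rw [corner_mul_apply, bmul, Finset.eventually_constant_sum h hm,
    Finset.eventually_constant_sum h hR]

lemma corner_submatrix_finSumFinEquiv (M : ℕ → ℕ → ℂ) :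
    (corner (2 + 2) M).submatrix finSumFinEquiv finSumFinEquiv
      = Matrix.fromBlocks (blk M 0 0) (blk M 0 1) (blk M 1 0) (blk M 1 1) := by
  ext (r | r) (s | s) <;>
    simp only [corner, blk, Matrix.submatrix_apply, Matrix.of_apply, Matrix.fromBlocks_apply₁₁,
      Matrix.fromBlocks_apply₁₂, Matrix.fromBlocks_apply₂₁, Matrix.fromBlocks_apply₂₂,
      finSumFinEquiv_apply_left, finSumFinEquiv_apply_right, Fin.val_castAdd, Fin.val_natAdd,
      mul_zero, mul_one, zero_add]

lemma corner_mul_apply_castAdd (M N : ℕ → ℕ → ℂ) (p q : Fin 2) :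
    (corner (2 + 2) M * corner (2 + 2) N) (Fin.castAdd 2 p) (Fin.castAdd 2 q)
      = (blk M 0 0 * blk N 0 0 + blk M 0 1 * blk N 1 0) p q := by
  have h := congrArg (fun A => A (Sum.inl p) (Sum.inl q))
    (Matrix.submatrix_mul (corner (2 + 2) M) (corner (2 + 2) N) finSumFinEquiv finSumFinEquiv
      finSumFinEquiv finSumFinEquiv.bijective)
  simpa only [corner_submatrix_finSumFinEquiv, Matrix.fromBlocks_multiply,
    Matrix.fromBlocks_apply₁₁, Matrix.submatrix_apply, finSumFinEquiv_apply_left] using h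

section Band

variable (a b c : ℕ → ℝ → ℂ) (t : ℝ)

lemma Jmat_eq_zero_of_add_two_le {i k : ℕ} (h : i + 2 ≤ k) : Jmat a b c t i k = 0 := by
  unfold Jmat; split_ifs <;> first | rfl | omega

lemma Jminus_eq_zero_of_le {i k : ℕ} (h : i ≤ k) : Jminus b c t i k = 0 := by
  unfold Jminus; split_ifs <;> first | rfl | omega

lemma Jminus_eq_zero_of_add_three_le {k j : ℕ} (h : j + 3 ≤ k) : Jminus b c t k j = 0 := by
  unfold Jminus; split_ifs <;> first | rfl | omega

lemma bmul_sub_bmul_Jminus_eq_corner {R : ℕ} (M : ℕ → ℕ → ℂ) {x y : Fin R} (hy : (y : ℕ) + 3 ≤ R) :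
    bmul M (Jminus b c t) x y - bmul (Jminus b c t) M x y
      = (corner R M * corner R (Jminus b c t) - corner R (Jminus b c t) * corner R M) x y := by
  rw [Matrix.sub_apply,
    bmul_eq_corner_mul_apply (y + 3)
      (fun k hk => by rw [Jminus_eq_zero_of_add_three_le b c t hk, mul_zero]) (by omega) hy,
    bmul_eq_corner_mul_apply x
      (fun k hk => by rw [Jminus_eq_zero_of_le b c t hk, zero_mul]) (by omega) x.2.le]

lemma bmul_Jmat_sub_bmul_Jminus_eq_corner {R : ℕ} {x y : Fin R} (hx : (x : ℕ) + 2 ≤ R) :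
    bmul (Jmat a b c t) (Jminus b c t) x y - bmul (Jminus b c t) (Jmat a b c t) x y
      = (corner R (Jmat a b c t) * corner R (Jminus b c t)
          - corner R (Jminus b c t) * corner R (Jmat a b c t)) x y := by
  rw [Matrix.sub_apply,
    bmul_eq_corner_mul_apply (x + 2)
      (fun k hk => by rw [Jmat_eq_zero_of_add_two_le a b c t hk, zero_mul]) (by omega) hx,
    bmul_eq_corner_mul_apply (x + 2)
      (fun k hk => by rw [Jminus_eq_zero_of_le b c t (by omega), zero_mul]) (by omega) hx]

lemma Jpow_succ_eq_sum_range (n : ℕ) {R i : ℕ} (j : ℕ) (hi : i + 2 ≤ R) :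
    Jpow a b c t (n + 1) i j = ∑ k ∈ range R, Jmat a b c t i k * Jpow a b c t n k j :=
  (Finset.eventually_constant_sum
    (fun k hk => by rw [Jmat_eq_zero_of_add_two_le a b c t hk, zero_mul]) hi).symm

lemma Jpow_succ_eq_corner_mul (n : ℕ) {R : ℕ} {x : Fin R} (y : Fin R) (hx : (x : ℕ) + 2 ≤ R) :
    Jpow a b c t (n + 1) x y = (corner R (Jmat a b c t) * corner R (Jpow a b c t n)) x y := by
  rw [corner_mul_apply, Jpow_succ_eq_sum_range a b c t n y hx]

lemma corner_Jpow_zero (R : ℕ) : corner R (Jpow a b c t 0) = 1 := by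
  ext x y
  simp [corner, Jpow, Matrix.one_apply, Fin.val_inj]

lemma corner_Jpow_succ_commutator_apply (n : ℕ) {R : ℕ}
    {x : Fin R} (y : Fin R) (hx : (x : ℕ) + 2 ≤ R) :
    (corner R (Jpow a b c t (n + 1)) * corner R (Jminus b c t)
        - corner R (Jminus b c t) * corner R (Jpow a b c t (n + 1))) x y
      = (corner R (Jmat a b c t) * corner R (Jpow a b c t n) * corner R (Jminus b c t)
        - corner R (Jminus b c t) * (corner R (Jmat a b c t) * corner R (Jpow a b c t n))) x y := by
  -- the two corners differ only in their last row, which row `x` of `J_-` does not reach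
  simp only [Matrix.sub_apply, Matrix.mul_apply (M := corner R (Jminus b c t))]
  congr 1
  · simp only [Matrix.mul_apply (N := corner R (Jminus b c t))]
    refine Finset.sum_congr rfl fun k _ => ?_
    rw [← Jpow_succ_eq_corner_mul a b c t n k hx]
    rfl
  · refine Finset.sum_congr rfl fun k _ => ?_
    rcases lt_or_ge (k : ℕ) x with hk | hk
    · rw [← Jpow_succ_eq_corner_mul a b c t n y (by omega)]
      rfl
    · simp only [corner, Matrix.of_apply, Jminus_eq_zero_of_le b c t hk, zero_mul]

lemma blk_Jminus_zero_one : blk (Jminus b c t) 0 1 = 0 := by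
  ext r s
  exact Jminus_eq_zero_of_le b c t (by omega)

end Band

theorem hasDerivAt_Jpow {a b c : ℕ → ℝ → ℂ}
    (hLax : ∀ t : ℝ, ∀ i j : ℕ,
      HasDerivAt (fun s => Jmat a b c s i j)
        (bmul (Jmat a b c t) (Jminus b c t) i j
          - bmul (Jminus b c t) (Jmat a b c t) i j) t)
    (n : ℕ) (t : ℝ) (i j : ℕ) :
    HasDerivAt (fun s => Jpow a b c s n i j)
      (bmul (Jpow a b c t n) (Jminus b c t) i j
        - bmul (Jminus b c t) (Jpow a b c t n) i j) t := by
  induction n generalizing i j with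
  | zero =>
    have hcomm : bmul (Jpow a b c t 0) (Jminus b c t) i j
        - bmul (Jminus b c t) (Jpow a b c t 0) i j = 0 := by
      simpa [corner_Jpow_zero] using
        bmul_sub_bmul_Jminus_eq_corner b c t (R := max i j + 3) (Jpow a b c t 0)
          (x := ⟨i, by omega⟩) (y := ⟨j, by omega⟩) (by simp)
    rw [hcomm]
    exact hasDerivAt_const t _
  | succ n ih =>
    set R := max i j + 3
    let x : Fin R := ⟨i, by omega⟩
    let y : Fin R := ⟨j, by omega⟩
    have hx : (x : ℕ) + 2 ≤ R := by simp only [x, R]; omega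
    have hy : (y : ℕ) + 3 ≤ R := by simp only [y, R]; omega
    have hprod : HasDerivAt
        (fun s => (corner R (Jmat a b c s) * corner R (Jpow a b c s n)) x y)
        (∑ k, ((corner R (Jmat a b c t) * corner R (Jminus b c t)
              - corner R (Jminus b c t) * corner R (Jmat a b c t)) x k
            * corner R (Jpow a b c t n) k y
          + corner R (Jmat a b c t) x k
            * (corner R (Jpow a b c t n) * corner R (Jminus b c t)
              - corner R (Jminus b c t) * corner R (Jpow a b c t n)) k y)) t := by
      simp only [Matrix.mul_apply]
      refine HasDerivAt.fun_sum fun k _ => ?_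
      rw [← bmul_Jmat_sub_bmul_Jminus_eq_corner a b c t hx, ← bmul_sub_bmul_Jminus_eq_corner b c t _ hy]
      exact (hLax t i k).mul (ih k j)
    have hfun : (fun s => Jpow a b c s (n + 1) i j)
        = fun s => (corner R (Jmat a b c s) * corner R (Jpow a b c s n)) x y :=
      funext fun s => Jpow_succ_eq_corner_mul a b c s n y hx
    rw [hfun]
    convert hprod using 1
    set J := corner R (Jmat a b c t)
    set Jm := corner R (Jminus b c t)
    set P := corner R (Jpow a b c t n)
    calc _ = (corner R (Jpow a b c t (n + 1)) * Jm - Jm * corner R (Jpow a b c t (n + 1))) x y :=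
          bmul_sub_bmul_Jminus_eq_corner b c t _ hy
      _ = (J * P * Jm - Jm * (J * P)) x y := corner_Jpow_succ_commutator_apply a b c t n y hx
      _ = ((J * Jm - Jm * J) * P + J * (P * Jm - Jm * P)) x y :=
          congrArg (fun M : Matrix (Fin R) (Fin R) ℂ => M x y) (by noncomm_ring)
      _ = _ := by simp only [Matrix.add_apply, Matrix.mul_apply, Finset.sum_add_distrib]

theorem deriv_block_of_lax_general (a b c : ℕ → ℝ → ℂ)
    (hLax : ∀ t : ℝ, ∀ i j : ℕ,
      HasDerivAt (fun s => Jmat a b c s i j)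
        (bmul (Jmat a b c t) (Jminus b c t) i j
          - bmul (Jminus b c t) (Jmat a b c t) i j) t) :
    ∀ n : ℕ, ∀ t : ℝ, ∀ p q : Fin 2,
      HasDerivAt (fun s => blk (Jpow a b c s n) 0 0 p q)
        ((blk (Jpow a b c t n) 0 0 * blk (Jminus b c t) 0 0
          - blk (Jminus b c t) 0 0 * blk (Jpow a b c t n) 0 0
          + blk (Jpow a b c t n) 0 1 * blk (Jminus b c t) 1 0) p q) t := by
  intro n t p q
  have h := hasDerivAt_Jpow hLax n t (Fin.castAdd 2 p) (Fin.castAdd 2 q)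
  rw [bmul_sub_bmul_Jminus_eq_corner b c t _ (by simp; omega), Matrix.sub_apply,
    corner_mul_apply_castAdd, corner_mul_apply_castAdd, blk_Jminus_zero_one] at h
  convert h using 1
  · simp [blk]
  · simp only [Matrix.add_apply, Matrix.sub_apply, Matrix.zero_mul, Matrix.zero_apply, add_zero]
    ring

/-- If `J` is bounded and its evolution satisfies the Lax pair equation
`J̇ = J J_- − J_- J`, then for every `n` the leading 2×2 block satisfies
`d/dt (Jⁿ)₁₁ = (Jⁿ)₁₁ (J_-)₁₁ − (J_-)₁₁ (Jⁿ)₁₁ + (Jⁿ)₁₂ (J_-)₂₁`. -/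
theorem deriv_block_of_lax (a b c : ℕ → ℝ → ℂ) (K : ℝ)
    (hbd : ∀ n : ℕ, ∀ t : ℝ,
      ‖a n t‖ ≤ K ∧ ‖b n t‖ ≤ K ∧ ‖c n t‖ ≤ K)
    (hLax : ∀ t : ℝ, ∀ i j : ℕ,
      HasDerivAt (fun s => Jmat a b c s i j)
        (bmul (Jmat a b c t) (Jminus b c t) i j
          - bmul (Jminus b c t) (Jmat a b c t) i j) t) :
    ∀ n : ℕ, ∀ t : ℝ, ∀ p q : Fin 2,
      HasDerivAt (fun s => blk (Jpow a b c s n) 0 0 p q)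
        ((blk (Jpow a b c t n) 0 0 * blk (Jminus b c t) 0 0
          - blk (Jminus b c t) 0 0 * blk (Jpow a b c t n) 0 0
          + blk (Jpow a b c t n) 0 1 * blk (Jminus b c t) 1 0) p q) t :=
  deriv_block_of_lax_general a b c hLax
end
end

section
/- With J, J_- four-banded as in the Kostant-Toda setting, for every n ∈ ℕ one has the block identity (J^{n+1})_{11} = (J^n)_{11} J_{11} + (J^n)_{12} (J_-)_{21}, where M_{ij} denotes the 2×2 block of M formed by rows 2i−1, 2i and columns 2j−1, 2j. Consequently, if J̇ = [J, J_-], then d/dt (J^n)_{11} = (J^{n+1})_{11} − (J^n)_{11} B_1 + [(J^n)_{11}, (J_-)_{11}], where B_1 = J_{11}. -/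
/-!
All of `J`, `J_-` and `Jⁿ` are upper-banded (`(Jⁿ)ᵢⱼ = 0` for `j > i + n`), and on upper-banded
matrices the row-by-column product is a finite sum, hence associative. So `J^{n+1} = Jⁿ J`; as
the first two columns of `J` vanish below row 4 and agree with those of `J_-` in rows 3 and 4,
this gives the block identity. Differentiating `J^{n+1} = J Jⁿ` and using associativity gives
the Lax equation `d/dt Jⁿ = [Jⁿ, J_-]`; its `(1,1)` block, with `(J_-)₁₂ = 0` and the block
identity substituted, is the evolution formula.
-/

open Finset

noncomputable section

namespace KostantToda

section BandedMatrices

variable {R : Type*}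

def UpperBand [Zero R] (p : ℕ) (M : ℕ → ℕ → R) : Prop :=
  ∀ i j, i + p < j → M i j = 0

/-- `∑ᶠ` is `0` when the support is infinite, so this is the genuine matrix product only when the
rows of `M` are finitely supported, e.g. when `UpperBand p M`. -/
def imul [Semiring R] (M P : ℕ → ℕ → R) (i j : ℕ) : R :=
  ∑ᶠ k, M i k * P k j

section Semiring

variable [Semiring R] {M P : ℕ → ℕ → R} {p q : ℕ}

theorem UpperBand.mono (hM : UpperBand p M) (hpq : p ≤ q) : UpperBand q M :=
  fun i j h => hM i j (by omega)

theorem imul_apply_eq_sum {s : Finset ℕ} {i j : ℕ} (h : ∀ k ∉ s, M i k * P k j = 0) :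
    imul M P i j = ∑ k ∈ s, M i k * P k j :=
  finsum_eq_sum_of_support_subset _ fun k hk => by_contra fun hks => hk (h k hks)

theorem UpperBand.imul_apply_eq_sum (hM : UpperBand p M) {i j N : ℕ} (hN : i + p + 1 ≤ N) :
    imul M P i j = ∑ k ∈ range N, M i k * P k j :=
  KostantToda.imul_apply_eq_sum fun k hk => by
    rw [hM i k (by simp at hk; omega), zero_mul]

theorem UpperBand.hasFiniteSupport (hM : UpperBand p M) (i j : ℕ) :
    Function.HasFiniteSupport fun k => M i k * P k j :=
  (range (i + p + 1)).finite_toSet.subset fun k hk => by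
    by_contra hki
    exact hk (show M i k * P k j = 0 by rw [hM i k (by simp at hki; omega), zero_mul])

theorem UpperBand.imul (hM : UpperBand p M) (hP : UpperBand q P) :
    UpperBand (p + q) (imul M P) := fun i j hij => by
  rw [hM.imul_apply_eq_sum le_rfl]
  exact sum_eq_zero fun k hk => by rw [hP k j (by simp at hk; omega), mul_zero]

theorem imul_kronecker (M : ℕ → ℕ → R) : imul M (fun i j => if i = j then 1 else 0) = M := by
  funext i j
  rw [imul, finsum_eq_single _ j fun k hk => by simp [hk]]
  simp

theorem kronecker_imul (M : ℕ → ℕ → R) : imul (fun i j => if i = j then 1 else 0) M = M := by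
  funext i j
  rw [imul, finsum_eq_single _ i fun k hk => by simp [Ne.symm hk]]
  simp

theorem imul_assoc (hM : UpperBand p M) (hP : UpperBand q P) (Q : ℕ → ℕ → R) :
    imul (imul M P) Q = imul M (imul P Q) := by
  funext i j
  rw [(hM.imul hP).imul_apply_eq_sum le_rfl, hM.imul_apply_eq_sum le_rfl]
  have inner : ∀ m ∈ range (i + p + 1),
      imul P Q m j = ∑ k ∈ range (i + (p + q) + 1), P m k * Q k j := fun m hm =>
    hP.imul_apply_eq_sum (by simp at hm; omega)
  rw [sum_congr rfl fun m hm => congrArg (M i m * ·) (inner m hm)]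
  simp_rw [hM.imul_apply_eq_sum le_rfl, sum_mul, mul_sum, mul_assoc]
  exact sum_comm

end Semiring

section Ring

variable [Ring R] {M M' P : ℕ → ℕ → R} {p p' : ℕ}

theorem UpperBand.sub (hM : UpperBand p M) (hP : UpperBand p P) : UpperBand p (M - P) :=
  fun i j h => by rw [Pi.sub_apply, Pi.sub_apply, hM i j h, hP i j h, sub_zero]

theorem sub_imul (hM : UpperBand p M) (hM' : UpperBand p' M') (P : ℕ → ℕ → R) :
    imul (M - M') P = imul M P - imul M' P := by
  funext i j
  simp only [imul, Pi.sub_apply, sub_mul]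
  exact finsum_sub_distrib (hM.hasFiniteSupport i j) (hM'.hasFiniteSupport i j)

theorem imul_sub (hM : UpperBand p M) (P P' : ℕ → ℕ → R) :
    imul M (P - P') = imul M P - imul M P' := by
  funext i j
  simp only [imul, Pi.sub_apply, mul_sub]
  exact finsum_sub_distrib (hM.hasFiniteSupport i j) (hM.hasFiniteSupport i j)

theorem imul_lie_add_imul_lie {A L X : ℕ → ℕ → R} {q r : ℕ}
    (hA : UpperBand p A) (hL : UpperBand q L) (hX : UpperBand r X) :
    imul (imul A L - imul L A) X + imul A (imul X L - imul L X)
      = imul (imul A X) L - imul L (imul A X) := by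
  rw [sub_imul (hA.imul hL) (hL.imul hA), imul_sub hA, imul_assoc hA hL, imul_assoc hL hA,
    imul_assoc hA hX]
  abel

end Ring

end BandedMatrices

section Jacobi

variable (a b c : ℕ → ℝ → ℂ) (t : ℝ)

theorem upperBand_Jmat : UpperBand 1 (Jmat a b c t) := fun i j h => by
  unfold Jmat
  rw [if_neg (by omega), if_neg (by omega), if_neg (by omega), if_neg (by omega)]

theorem upperBand_Jminus : UpperBand 0 (Jminus b c t) := fun i j h => by
  unfold Jminus
  rw [if_neg (by omega), if_neg (by omega)]

theorem Jmat_eq_zero_of_add_two_lt {i j : ℕ} (h : j + 2 < i) : Jmat a b c t i j = 0 := by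
  unfold Jmat
  rw [if_neg (by omega), if_neg (by omega), if_neg (by omega), if_neg (by omega)]

theorem Jminus_eq_zero_of_add_two_lt {i j : ℕ} (h : j + 2 < i) : Jminus b c t i j = 0 := by
  unfold Jminus
  rw [if_neg (by omega), if_neg (by omega)]

theorem Jmat_eq_Jminus_of_lt {i j : ℕ} (h : j < i) : Jmat a b c t i j = Jminus b c t i j := by
  unfold Jmat Jminus
  rw [if_neg (by omega), if_neg (by omega)]

theorem Jpow_succ_eq_imul (n : ℕ) :
    Jpow a b c t (n + 1) = imul (Jmat a b c t) (Jpow a b c t n) := by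
  funext i j
  rw [(upperBand_Jmat a b c t).imul_apply_eq_sum le_rfl]
  rfl

theorem upperBand_Jpow (n : ℕ) : UpperBand n (Jpow a b c t n) := by
  induction n with
  | zero => exact fun i j h => if_neg (by omega)
  | succ n ih =>
    rw [Jpow_succ_eq_imul, add_comm n]
    exact (upperBand_Jmat a b c t).imul ih

theorem Jpow_succ_eq_imul_right (n : ℕ) :
    Jpow a b c t (n + 1) = imul (Jpow a b c t n) (Jmat a b c t) := by
  induction n with
  | zero => rw [Jpow_succ_eq_imul]; exact (imul_kronecker _).trans (kronecker_imul _).symm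
  | succ n ih =>
    calc Jpow a b c t (n + 2) = imul (Jmat a b c t) (imul (Jpow a b c t n) (Jmat a b c t)) := by
          rw [Jpow_succ_eq_imul, ih]
      _ = imul (Jpow a b c t (n + 1)) (Jmat a b c t) := by
          rw [← imul_assoc (upperBand_Jmat a b c t) (upperBand_Jpow a b c t n), Jpow_succ_eq_imul]

theorem bmul_eq_imul {M : ℕ → ℕ → ℂ} (hM : UpperBand 2 M) (P : ℕ → ℕ → ℂ) :
    bmul M P = imul M P := by
  funext i j
  rw [hM.imul_apply_eq_sum (by omega : i + 2 + 1 ≤ max i j + 3)]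
  rfl

theorem upperBand_lax :
    UpperBand 1 (imul (Jmat a b c t) (Jminus b c t) - imul (Jminus b c t) (Jmat a b c t)) :=
  ((upperBand_Jmat a b c t).imul (upperBand_Jminus b c t)).sub
    ((upperBand_Jminus b c t).imul (upperBand_Jmat a b c t))

theorem hasDerivAt_Jpow
    (hJ : ∀ t i j, HasDerivAt (fun s => Jmat a b c s i j)
      ((imul (Jmat a b c t) (Jminus b c t) - imul (Jminus b c t) (Jmat a b c t)) i j) t)
    (n i j : ℕ) :
    HasDerivAt (fun s => Jpow a b c s n i j)
      ((imul (Jpow a b c t n) (Jminus b c t) - imul (Jminus b c t) (Jpow a b c t n)) i j) t := by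
  induction n generalizing i j with
  | zero =>
    rw [Jpow, imul_kronecker, kronecker_imul, sub_self]
    exact hasDerivAt_const t _
  | succ n ih =>
    have hsum := HasDerivAt.fun_sum (u := range (i + 2)) fun k _ => (hJ t i k).mul (ih k j)
    rw [sum_add_distrib, ← (upperBand_lax a b c t).imul_apply_eq_sum le_rfl,
      ← (upperBand_Jmat a b c t).imul_apply_eq_sum le_rfl, ← Pi.add_apply, ← Pi.add_apply,
      imul_lie_add_imul_lie (upperBand_Jmat a b c t) (upperBand_Jminus b c t)
        (upperBand_Jpow a b c t n),
      ← Jpow_succ_eq_imul] at hsum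
    exact hsum

end Jacobi

section Blocks

theorem blk_zero_zero_apply (M : ℕ → ℕ → ℂ) (r s : Fin 2) : blk M 0 0 r s = M r s := by
  simp [blk]

theorem blk_sub (M P : ℕ → ℕ → ℂ) (p q : ℕ) : blk (M - P) p q = blk M p q - blk P p q := rfl

theorem blk_imul_zero_zero {M P : ℕ → ℕ → ℂ}
    (h : ∀ i j k, i < 2 → j < 2 → 4 ≤ k → M i k * P k j = 0) :
    blk (imul M P) 0 0 = blk M 0 0 * blk P 0 0 + blk M 0 1 * blk P 1 0 := by
  ext r s
  rw [blk_zero_zero_apply, imul_apply_eq_sum (s := range 4) fun k hk =>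
    h r s k r.isLt s.isLt (by simpa using hk)]
  simp only [sum_range_succ, range_one, sum_singleton, blk, mul_zero, zero_add, mul_one,
    Matrix.add_apply, Matrix.mul_apply, Matrix.of_apply, Fin.sum_univ_two, Fin.isValue,
    Fin.coe_ofNat_eq_mod, Nat.zero_mod, Nat.mod_succ, add_zero, Nat.reduceAdd]
  ring

variable (a b c : ℕ → ℝ → ℂ) (t : ℝ)

theorem blk_Jmat_one_zero : blk (Jmat a b c t) 1 0 = blk (Jminus b c t) 1 0 := by
  ext r s
  exact Jmat_eq_Jminus_of_lt a b c t (by omega)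

theorem blk_Jminus_zero_one : blk (Jminus b c t) 0 1 = 0 := by
  ext r s
  exact upperBand_Jminus b c t _ _ (by simp; omega)

theorem blk_Jpow_succ (n : ℕ) :
    blk (Jpow a b c t (n + 1)) 0 0 =
      blk (Jpow a b c t n) 0 0 * blk (Jmat a b c t) 0 0
        + blk (Jpow a b c t n) 0 1 * blk (Jminus b c t) 1 0 := by
  rw [Jpow_succ_eq_imul_right, blk_imul_zero_zero fun i j k _ hj hk => by
    rw [Jmat_eq_zero_of_add_two_lt a b c t (by omega), mul_zero], blk_Jmat_one_zero]

theorem blk_imul_Jminus (M : ℕ → ℕ → ℂ) :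
    blk (imul M (Jminus b c t)) 0 0 =
      blk M 0 0 * blk (Jminus b c t) 0 0 + blk M 0 1 * blk (Jminus b c t) 1 0 :=
  blk_imul_zero_zero fun i j k _ hj hk => by
    rw [Jminus_eq_zero_of_add_two_lt b c t (by omega), mul_zero]

theorem blk_Jminus_imul (M : ℕ → ℕ → ℂ) :
    blk (imul (Jminus b c t) M) 0 0 = blk (Jminus b c t) 0 0 * blk M 0 0 := by
  rw [blk_imul_zero_zero fun i j k hi _ hk => by
    rw [upperBand_Jminus b c t i k (by omega), zero_mul], blk_Jminus_zero_one, zero_mul, add_zero]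

theorem blk_lie_Jpow_Jminus (n : ℕ) :
    blk (imul (Jpow a b c t n) (Jminus b c t) - imul (Jminus b c t) (Jpow a b c t n)) 0 0
      = blk (Jpow a b c t (n + 1)) 0 0 - blk (Jpow a b c t n) 0 0 * blk (Jmat a b c t) 0 0
        + (blk (Jpow a b c t n) 0 0 * blk (Jminus b c t) 0 0
          - blk (Jminus b c t) 0 0 * blk (Jpow a b c t n) 0 0) := by
  rw [blk_sub, blk_imul_Jminus, blk_Jminus_imul, blk_Jpow_succ]
  abel

end Blocks

end KostantToda

open KostantToda

theorem block_identity_and_evolution_general (a b c : ℕ → ℝ → ℂ) :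
    (∀ t : ℝ, ∀ n : ℕ,
      blk (Jpow a b c t (n + 1)) 0 0 =
        blk (Jpow a b c t n) 0 0 * blk (Jmat a b c t) 0 0
          + blk (Jpow a b c t n) 0 1 * blk (Jminus b c t) 1 0) ∧
    ((∀ t : ℝ, ∀ i j : ℕ,
        HasDerivAt (fun s => Jmat a b c s i j)
          (bmul (Jmat a b c t) (Jminus b c t) i j
            - bmul (Jminus b c t) (Jmat a b c t) i j) t) →
      ∀ n : ℕ, ∀ t : ℝ, ∀ p q : Fin 2,
        HasDerivAt (fun s => blk (Jpow a b c s n) 0 0 p q)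
          ((blk (Jpow a b c t (n + 1)) 0 0
            - blk (Jpow a b c t n) 0 0 * blk (Jmat a b c t) 0 0
            + (blk (Jpow a b c t n) 0 0 * blk (Jminus b c t) 0 0
              - blk (Jminus b c t) 0 0 * blk (Jpow a b c t n) 0 0)) p q) t) := by
  refine ⟨blk_Jpow_succ a b c, fun hJ n t p q => ?_⟩
  have hLax : ∀ t i j, HasDerivAt (fun s => Jmat a b c s i j)
      ((imul (Jmat a b c t) (Jminus b c t) - imul (Jminus b c t) (Jmat a b c t)) i j) t := by
    simpa only [Pi.sub_apply, bmul_eq_imul ((upperBand_Jmat a b c _).mono one_le_two),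
      bmul_eq_imul ((upperBand_Jminus b c _).mono zero_le_two)] using hJ
  simpa only [← blk_lie_Jpow_Jminus, blk_zero_zero_apply] using
    hasDerivAt_Jpow a b c t hLax n p q

/-- For every `n`, `(J^{n+1})₁₁ = (Jⁿ)₁₁ J₁₁ + (Jⁿ)₁₂ (J_-)₂₁`; consequently, if
`J̇ = [J, J_-]`, then
`d/dt (Jⁿ)₁₁ = (J^{n+1})₁₁ − (Jⁿ)₁₁ B₁ + [(Jⁿ)₁₁, (J_-)₁₁]` with `B₁ = J₁₁`. -/
theorem block_identity_and_evolution (a b c : ℕ → ℝ → ℂ)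
    (hb0 : ∀ t, b 0 t = 0) (hc0 : ∀ t, c 0 t = 0) :
    (∀ t : ℝ, ∀ n : ℕ,
      blk (Jpow a b c t (n + 1)) 0 0 =
        blk (Jpow a b c t n) 0 0 * blk (Jmat a b c t) 0 0
          + blk (Jpow a b c t n) 0 1 * blk (Jminus b c t) 1 0) ∧
    ((∀ t : ℝ, ∀ i j : ℕ,
        HasDerivAt (fun s => Jmat a b c s i j)
          (bmul (Jmat a b c t) (Jminus b c t) i j
            - bmul (Jminus b c t) (Jmat a b c t) i j) t) →
      ∀ n : ℕ, ∀ t : ℝ, ∀ p q : Fin 2,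
        HasDerivAt (fun s => blk (Jpow a b c s n) 0 0 p q)
          ((blk (Jpow a b c t (n + 1)) 0 0
            - blk (Jpow a b c t n) 0 0 * blk (Jmat a b c t) 0 0
            + (blk (Jpow a b c t n) 0 0 * blk (Jminus b c t) 0 0
              - blk (Jminus b c t) 0 0 * blk (Jpow a b c t n) 0 0)) p q) t) :=
  block_identity_and_evolution_general a b c
end
end

section
/- Let J be a bounded operator on ℓ² with ‖J‖ ≤ K, and define R_J(z) = Σ_{n≥0} (J^n)_{11}/z^{n+1} for |z| > ‖J‖ (the leading 2×2 block of the resolvent (zI − J)^{-1}). Then the following are equivalent: (b) for all n ≥ 0, d/dt (J^n)_{11} = (J^{n+1})_{11} − (J^n)_{11} B_1 + [(J^n)_{11}, (J_-)_{11}]; (c) for all |z| > ‖J‖, Ṙ_J(z) = R_J(z)(zI₂ − B_1) − I₂ + [R_J(z), (J_-)_{11}]. -/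
open Finset

noncomputable section

/-- The leading 2×2 block of the resolvent:
`R_J(z) = Σ_{n≥0} (Jⁿ)₁₁ / z^{n+1}`. -/
def Rfun (a b c : ℕ → ℝ → ℂ) (z : ℂ) (t : ℝ) : Matrix (Fin 2) (Fin 2) ℂ :=
  Matrix.of fun p q : Fin 2 => ∑' n : ℕ, blk (Jpow a b c t n) 0 0 p q / z ^ (n + 1)

/-!
Write `A_m(t)` for the leading block of `J(t)^m`. Both conditions are statements about the
series `R_J(z) = Σ_m A_m z^{-(m+1)}`, whose coefficients grow at most like `K^m`. Shifting the
index turns `Σ_m A_{m+1} z^{-(m+1)}` into `z R_J(z) - I₂`, so the right-hand side of (c) is the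
series whose coefficients are the right-hand sides of (b). Given (b), the series may be
differentiated termwise on `|z| > K`. Conversely, on the circle `w = r e^{iθ}` with `r = K + 1`
the coefficients are recovered as `A_n = (2π)⁻¹ ∫₀^{2π} R_J(w) w^{n+1} dθ`, and differentiating
this integral under the integral sign turns (c) back into (b).
-/

open Real MeasureTheory

section LaurentSeries

variable {K C : ℝ}

lemma norm_div_pow_succ_le {c z : ℂ} {m : ℕ} (hc : ‖c‖ ≤ C * K ^ m) :
    ‖c / z ^ (m + 1)‖ ≤ C / ‖z‖ * (K / ‖z‖) ^ m := by
  rw [norm_div, norm_pow, div_pow]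
  calc ‖c‖ / ‖z‖ ^ (m + 1) ≤ C * K ^ m / ‖z‖ ^ (m + 1) := by gcongr
    _ = C / ‖z‖ * (K ^ m / ‖z‖ ^ m) := by ring

lemma hasSum_mul_geometric_div (hK : 0 ≤ K) {r : ℝ} (hr : K < r) :
    HasSum (fun m : ℕ => C / r * (K / r) ^ m) (C / (r - K)) := by
  have hr0 : 0 < r := hK.trans_lt hr
  rw [show C / (r - K) = C / r * (1 - K / r)⁻¹ by field_simp]
  exact (hasSum_geometric_of_lt_one (by positivity) ((div_lt_one hr0).2 hr)).mul_left (C / r)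

lemma summable_div_pow_succ {c : ℕ → ℂ} {z : ℂ} (hK : 0 ≤ K) (hz : K < ‖z‖)
    (hc : ∀ m, ‖c m‖ ≤ C * K ^ m) : Summable fun m => c m / z ^ (m + 1) :=
  .of_norm_bounded (hasSum_mul_geometric_div hK hz).summable fun m =>
    norm_div_pow_succ_le (hc m)

lemma norm_tsum_div_pow_succ_le {c : ℕ → ℂ} {z : ℂ} (hK : 0 ≤ K) (hz : K < ‖z‖)
    (hc : ∀ m, ‖c m‖ ≤ C * K ^ m) : ‖∑' m, c m / z ^ (m + 1)‖ ≤ C / (‖z‖ - K) :=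
  tsum_of_norm_bounded (hasSum_mul_geometric_div hK hz) fun m => norm_div_pow_succ_le (hc m)

lemma hasDerivAt_tsum_div_pow_succ {A G : ℕ → ℝ → ℂ} {z : ℂ} {t : ℝ} (hK : 0 ≤ K)
    (hz : K < ‖z‖) (hA : ∀ m, ‖A m t‖ ≤ C * K ^ m) (hG : ∀ m s, ‖G m s‖ ≤ C * K ^ m)
    (hAG : ∀ m s, HasDerivAt (A m) (G m s) s) :
    HasDerivAt (fun s => ∑' m, A m s / z ^ (m + 1)) (∑' m, G m t / z ^ (m + 1)) t :=
  hasDerivAt_tsum (hasSum_mul_geometric_div hK hz).summable (fun m s => (hAG m s).div_const _)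
    (fun m s => norm_div_pow_succ_le (hG m s)) (summable_div_pow_succ hK hz hA) t

lemma continuous_tsum_div_circleMap_pow {c : ℕ → ℂ} {r : ℝ} (hK : 0 ≤ K) (hr : K < r)
    (hc : ∀ m, ‖c m‖ ≤ C * K ^ m) :
    Continuous fun θ => ∑' m, c m / circleMap 0 r θ ^ (m + 1) := by
  have hr0 : 0 < r := hK.trans_lt hr
  refine continuous_tsum (fun m => ?_) (hasSum_mul_geometric_div (C := C) hK hr).summable
    fun m θ => ?_
  · exact continuous_const.div ((continuous_circleMap 0 r).pow _)
      fun θ => pow_ne_zero _ (circleMap_ne_center hr0.ne')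
  · simpa [abs_of_pos hr0] using norm_div_pow_succ_le (z := circleMap 0 r θ) (hc m)

lemma integral_circleMap_zero_zpow (r : ℝ) (k : ℤ) :
    ∫ θ in (0)..(2 * π), circleMap 0 r θ ^ k = if k = 0 then (2 * π : ℂ) else 0 := by
  rcases eq_or_ne k 0 with rfl | hk
  · simp
  have hkI : (k : ℂ) * Complex.I ≠ 0 := by simp [hk]
  simp only [circleMap_zero_zpow, if_neg hk]
  simp only [circleMap_zero, intervalIntegral.integral_const_mul]
  push_cast
  simp_rw [show ∀ θ : ℝ, (k : ℂ) * θ * Complex.I = (k * Complex.I) * θ from fun θ => by ring]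
  rw [integral_exp_mul_complex hkI]
  have : Complex.exp (k * Complex.I * (2 * π)) = 1 := by
    rw [← Complex.exp_int_mul_two_pi_mul_I k]; ring_nf
  simp [this]

lemma integral_tsum_div_circleMap_pow_mul_pow {c : ℕ → ℂ} {r : ℝ} (hK : 0 ≤ K) (hr : K < r)
    (hc : ∀ m, ‖c m‖ ≤ C * K ^ m) (n : ℕ) :
    ∫ θ in (0)..(2 * π), (∑' m, c m / circleMap 0 r θ ^ (m + 1)) * circleMap 0 r θ ^ (n + 1)
      = 2 * π * c n := by
  have hr0 : 0 < r := hK.trans_lt hr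
  have hw : ∀ θ, ‖circleMap 0 r θ‖ = r := by simp [abs_of_pos hr0]
  have hw0 : ∀ θ, circleMap 0 r θ ≠ 0 := fun θ => circleMap_ne_center hr0.ne'
  have hF : ∀ m θ, c m / circleMap 0 r θ ^ (m + 1) * circleMap 0 r θ ^ (n + 1)
      = c m * circleMap 0 r θ ^ ((n : ℤ) - m) := fun m θ => by
    have := hw0 θ
    rw [zpow_sub₀ this, zpow_natCast, zpow_natCast]
    field_simp
    ring
  have hF_bound : ∀ m θ, ‖c m * circleMap 0 r θ ^ ((n : ℤ) - m)‖
      ≤ C / r * (K / r) ^ m * r ^ (n + 1) := fun m θ => by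
    simpa only [← hF, norm_mul, norm_pow, hw] using mul_le_mul_of_nonneg_right
      (norm_div_pow_succ_le (z := circleMap 0 r θ) (hc m)) (pow_nonneg hr0.le (n + 1))
  have hF_sum : ∀ θ, HasSum (fun m => c m * circleMap 0 r θ ^ ((n : ℤ) - m))
      ((∑' m, c m / circleMap 0 r θ ^ (m + 1)) * circleMap 0 r θ ^ (n + 1)) := fun θ => by
    have hz : K < ‖circleMap 0 r θ‖ := by rwa [hw]
    simpa only [hF] using
      (summable_div_pow_succ hK hz hc).hasSum.mul_right (circleMap 0 r θ ^ (n + 1))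
  have hsum : HasSum (fun m => ∫ θ in (0)..(2 * π), c m * circleMap 0 r θ ^ ((n : ℤ) - m))
      (∫ θ in (0)..(2 * π),
        (∑' m, c m / circleMap 0 r θ ^ (m + 1)) * circleMap 0 r θ ^ (n + 1)) :=
    intervalIntegral.hasSum_integral_of_dominated_convergence
    (fun m _ => C / r * (K / r) ^ m * r ^ (n + 1))
    (fun m => (((continuous_circleMap 0 r).zpow₀ _ fun θ => .inl (hw0 θ)).const_mul
      (c m)).aestronglyMeasurable)
    (fun m => ae_of_all _ fun θ _ => hF_bound m θ)
    (ae_of_all _ fun θ _ => ((hasSum_mul_geometric_div hK hr).mul_right _).summable)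
    intervalIntegrable_const (ae_of_all _ fun θ _ => hF_sum θ)
  have hcoeff : ∀ m, ∫ θ in (0)..(2 * π), c m * circleMap 0 r θ ^ ((n : ℤ) - m)
      = if m = n then 2 * π * c n else 0 := fun m => by
    rw [intervalIntegral.integral_const_mul, integral_circleMap_zero_zpow]
    rcases eq_or_ne m n with rfl | hmn
    · simp [mul_comm]
    · simp [sub_eq_zero, hmn, hmn.symm]
  simp only [hcoeff] at hsum
  exact (hasSum_ite_eq n _).unique hsum |>.symm

lemma hasDerivAt_of_hasDerivAt_tsum_div_pow_succ {A G : ℕ → ℝ → ℂ} (hK : 0 ≤ K)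
    (hA : ∀ m s, ‖A m s‖ ≤ C * K ^ m) (hG : ∀ m s, ‖G m s‖ ≤ C * K ^ m)
    (hAG : ∀ z : ℂ, K < ‖z‖ → ∀ s,
      HasDerivAt (fun s => ∑' m, A m s / z ^ (m + 1)) (∑' m, G m s / z ^ (m + 1)) s)
    (n : ℕ) (t : ℝ) : HasDerivAt (A n) (G n t) t := by
  set r := K + 1
  have hr : K < r := by linarith
  have hw : ∀ θ, ‖circleMap 0 r θ‖ = r := by simp [abs_of_pos (hK.trans_lt hr)]
  have hwK : ∀ θ, K < ‖circleMap 0 r θ‖ := fun θ => by rwa [hw]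
  set F : ℝ → ℝ → ℂ := fun s θ =>
    (∑' m, A m s / circleMap 0 r θ ^ (m + 1)) * circleMap 0 r θ ^ (n + 1)
  set F' : ℝ → ℝ → ℂ := fun s θ =>
    (∑' m, G m s / circleMap 0 r θ ^ (m + 1)) * circleMap 0 r θ ^ (n + 1)
  have hF_cont : ∀ s, Continuous (F s) := fun s =>
    (continuous_tsum_div_circleMap_pow hK hr (hA · s)).mul ((continuous_circleMap 0 r).pow _)
  have hF'_bound : ∀ s θ, ‖F' s θ‖ ≤ C / (r - K) * r ^ (n + 1) := fun s θ => by
    simpa only [F', norm_mul, norm_pow, hw] using mul_le_mul_of_nonneg_right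
      (norm_tsum_div_pow_succ_le hK (hwK θ) (hG · s)) (pow_nonneg (hK.trans hr.le) (n + 1))
  have hderiv := (intervalIntegral.hasDerivAt_integral_of_dominated_loc_of_deriv_le
    (μ := volume) (a := 0) (b := 2 * π) (F := F) (F' := F') (x₀ := t)
    (bound := fun _ => C / (r - K) * r ^ (n + 1)) Filter.univ_mem
    (.of_forall fun s => (hF_cont s).aestronglyMeasurable)
    ((hF_cont t).intervalIntegrable _ _)
    ((continuous_tsum_div_circleMap_pow hK hr (hG · t)).mul
      ((continuous_circleMap 0 r).pow _)).aestronglyMeasurable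
    (ae_of_all _ fun θ _ s _ => hF'_bound s θ) intervalIntegrable_const
    (ae_of_all _ fun θ _ s _ => (hAG _ (hwK θ) s).mul_const _)).2
  simp only [F, F', integral_tsum_div_circleMap_pow_mul_pow hK hr (hA · _),
    integral_tsum_div_circleMap_pow_mul_pow hK hr (hG · t)] at hderiv
  simpa [← mul_assoc, Real.pi_ne_zero] using hderiv.const_mul (2 * π : ℂ)⁻¹

theorem hasDerivAt_coeff_iff_hasDerivAt_tsum_div_pow_succ {A G : ℕ → ℝ → ℂ} (hK : 0 ≤ K)
    (hA : ∀ m s, ‖A m s‖ ≤ C * K ^ m) (hG : ∀ m s, ‖G m s‖ ≤ C * K ^ m) :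
    (∀ m t, HasDerivAt (A m) (G m t) t) ↔ ∀ z : ℂ, K < ‖z‖ → ∀ t,
      HasDerivAt (fun s => ∑' m, A m s / z ^ (m + 1)) (∑' m, G m t / z ^ (m + 1)) t :=
  ⟨fun h _ hz t => hasDerivAt_tsum_div_pow_succ hK hz (hA · t) hG h,
    fun h => hasDerivAt_of_hasDerivAt_tsum_div_pow_succ hK hA hG h⟩

end LaurentSeries

lemma hasSum_inv_pow_smul_evolution {𝕜 𝔸 : Type*} [Field 𝕜] [Ring 𝔸] [Algebra 𝕜 𝔸]
    [TopologicalSpace 𝔸] [IsTopologicalRing 𝔸] [ContinuousConstSMul 𝕜 𝔸]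
    {P : ℕ → 𝔸} {R : 𝔸} {z : 𝕜} (hz : z ≠ 0) (hP : HasSum (fun m => (z ^ (m + 1))⁻¹ • P m) R)
    (B J : 𝔸) :
    HasSum (fun m => (z ^ (m + 1))⁻¹ • (P (m + 1) - P m * B + (P m * J - J * P m)))
      (R * (z • 1 - B) - P 0 + (R * J - J * R)) := by
  have hshift : HasSum (fun m => (z ^ (m + 1))⁻¹ • P (m + 1)) (z • R - P 0) := by
    have h := ((hasSum_nat_add_iff' 1).2 hP).const_smul z
    simp only [Finset.range_one, Finset.sum_singleton, zero_add, pow_one, smul_sub, smul_smul,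
      mul_inv_cancel₀ hz, one_smul] at h
    refine h.congr_fun fun m => ?_
    rw [pow_succ _ (m + 1), mul_inv, mul_left_comm, mul_inv_cancel₀ hz, mul_one]
  rw [mul_sub, mul_smul_comm, mul_one, sub_right_comm]
  refine ((hshift.sub (hP.mul_right B)).add ((hP.mul_right J).sub (hP.mul_left J))).congr_fun
    fun m => ?_
  simp only [smul_sub, smul_add, smul_mul_assoc, mul_smul_comm]

lemma norm_mul_apply_le {R l m n : Type*} [NonUnitalSeminormedRing R] [Fintype m]
    {M : Matrix l m R} {N : Matrix m n R} {α β : ℝ} (hM : ∀ i j, ‖M i j‖ ≤ α)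
    (hN : ∀ i j, ‖N i j‖ ≤ β) (i : l) (j : n) :
    ‖(M * N) i j‖ ≤ Fintype.card m * (α * β) := by
  rw [Matrix.mul_apply]
  refine (norm_sum_le _ _).trans ?_
  exact (Finset.sum_le_card_nsmul _ _ _ fun k _ => norm_mul_le_of_le (hM i k) (hN k j)).trans_eq
    (by simp)

section FourBanded

variable {a b c : ℕ → ℝ → ℂ} {K : ℝ}

lemma Jpow_one_apply (t : ℝ) {i j : ℕ} (h : j < i + 2) :
    Jpow a b c t 1 i j = Jmat a b c t i j := by
  simp [Jpow, Finset.mem_range.2 h]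

lemma blk_Jpow_zero (t : ℝ) : blk (Jpow a b c t 0) 0 0 = 1 := by
  ext p q
  simp [blk, Jpow, Matrix.one_apply, Fin.val_inj]

lemma one_le_of_norm_Jpow_le (hK : ∀ t n i j, ‖Jpow a b c t n i j‖ ≤ K ^ n) : 1 ≤ K := by
  simpa [Jpow_one_apply 0 (show 1 < 0 + 2 by norm_num), Jmat] using hK 0 1 0 1

lemma norm_blk_Jmat_apply_le (hK : ∀ t n i j, ‖Jpow a b c t n i j‖ ≤ K ^ n) (t : ℝ)
    (p q : Fin 2) : ‖blk (Jmat a b c t) 0 0 p q‖ ≤ K := by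
  simpa [blk, Jpow_one_apply t (show (q : ℕ) < p + 2 by omega)] using hK t 1 p q

lemma norm_blk_Jminus_apply_le (hK : ∀ t n i j, ‖Jpow a b c t n i j‖ ≤ K ^ n) (t : ℝ)
    (p q : Fin 2) : ‖blk (Jminus b c t) 0 0 p q‖ ≤ K := by
  have hb : ‖b 1 t‖ ≤ K := by simpa [blk, Jmat] using norm_blk_Jmat_apply_le hK t 1 0
  have hK0 : 0 ≤ K := zero_le_one.trans (one_le_of_norm_Jpow_le hK)
  fin_cases p <;> fin_cases q <;> simp [blk, Jminus, hb, hK0]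

variable (a b c) in
def blockEvolution (t : ℝ) (n : ℕ) : Matrix (Fin 2) (Fin 2) ℂ :=
  blk (Jpow a b c t (n + 1)) 0 0 - blk (Jpow a b c t n) 0 0 * blk (Jmat a b c t) 0 0
    + (blk (Jpow a b c t n) 0 0 * blk (Jminus b c t) 0 0
      - blk (Jminus b c t) 0 0 * blk (Jpow a b c t n) 0 0)

lemma norm_blockEvolution_apply_le (hK : ∀ t n i j, ‖Jpow a b c t n i j‖ ≤ K ^ n) (t : ℝ)
    (n : ℕ) (p q : Fin 2) : ‖blockEvolution a b c t n p q‖ ≤ 7 * K * K ^ n := by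
  have hP : ∀ m i j, ‖blk (Jpow a b c t m) 0 0 i j‖ ≤ K ^ m := fun m i j => hK t m _ _
  have hPB := norm_mul_apply_le (hP n) (norm_blk_Jmat_apply_le hK t) p q
  have hPJ := norm_mul_apply_le (hP n) (norm_blk_Jminus_apply_le hK t) p q
  have hJP := norm_mul_apply_le (norm_blk_Jminus_apply_le hK t) (hP n) p q
  simp only [Fintype.card_fin, Nat.cast_ofNat] at hPB hPJ hJP
  simp only [blockEvolution, Matrix.add_apply, Matrix.sub_apply]
  calc _ ≤ ‖blk (Jpow a b c t (n + 1)) 0 0 p q‖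
          + ‖(blk (Jpow a b c t n) 0 0 * blk (Jmat a b c t) 0 0) p q‖
        + (‖(blk (Jpow a b c t n) 0 0 * blk (Jminus b c t) 0 0) p q‖
          + ‖(blk (Jminus b c t) 0 0 * blk (Jpow a b c t n) 0 0) p q‖) :=
        (norm_add_le _ _).trans (add_le_add (norm_sub_le _ _) (norm_sub_le _ _))
    _ ≤ K ^ (n + 1) + 2 * (K ^ n * K) + (2 * (K ^ n * K) + 2 * (K * K ^ n)) := by
        gcongr
        exact hP (n + 1) p q
    _ = 7 * K * K ^ n := by ring

lemma hasSum_Rfun (hK : ∀ t n i j, ‖Jpow a b c t n i j‖ ≤ K ^ n) {z : ℂ} (hz : K < ‖z‖)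
    (t : ℝ) :
    HasSum (fun m => (z ^ (m + 1))⁻¹ • blk (Jpow a b c t m) 0 0) (Rfun a b c z t) := by
  have hK0 : 0 ≤ K := zero_le_one.trans (one_le_of_norm_Jpow_le hK)
  refine Pi.hasSum.2 fun p => Pi.hasSum.2 fun q => ?_
  simp only [Matrix.smul_apply, smul_eq_mul, inv_mul_eq_div]
  exact (summable_div_pow_succ hK0 hz (C := 1) fun m => by simpa [blk] using hK t m _ _).hasSum

lemma tsum_blockEvolution_div_pow_succ (hK : ∀ t n i j, ‖Jpow a b c t n i j‖ ≤ K ^ n) {z : ℂ}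
    (hz : K < ‖z‖) (t : ℝ) (p q : Fin 2) :
    ∑' m, blockEvolution a b c t m p q / z ^ (m + 1)
      = (Rfun a b c z t * (z • (1 : Matrix (Fin 2) (Fin 2) ℂ) - blk (Jmat a b c t) 0 0) - 1
          + (Rfun a b c z t * blk (Jminus b c t) 0 0
            - blk (Jminus b c t) 0 0 * Rfun a b c z t)) p q := by
  have hK0 : 0 ≤ K := zero_le_one.trans (one_le_of_norm_Jpow_le hK)
  have hz0 : z ≠ 0 := norm_pos_iff.1 (hK0.trans_lt hz)
  have h := hasSum_inv_pow_smul_evolution hz0 (hasSum_Rfun hK hz t) (blk (Jmat a b c t) 0 0)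
    (blk (Jminus b c t) 0 0)
  rw [blk_Jpow_zero] at h
  have hpq := Pi.hasSum.1 (Pi.hasSum.1 h p) q
  simp only [Matrix.smul_apply, smul_eq_mul, inv_mul_eq_div] at hpq
  exact hpq.tsum_eq

end FourBanded

/-- For a uniformly bounded four-banded `J`, the evolution equations of all blocks
`(Jⁿ)₁₁` are equivalent to the evolution equation of the resolvent function `R_J`. -/
theorem block_evolution_iff_resolvent_evolution (a b c : ℕ → ℝ → ℂ) (K : ℝ)
    (hK : ∀ t : ℝ, ∀ n i j : ℕ, ‖Jpow a b c t n i j‖ ≤ K ^ n) :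
    (∀ n : ℕ, ∀ t : ℝ, ∀ p q : Fin 2,
        HasDerivAt (fun s => blk (Jpow a b c s n) 0 0 p q)
          ((blk (Jpow a b c t (n + 1)) 0 0
            - blk (Jpow a b c t n) 0 0 * blk (Jmat a b c t) 0 0
            + (blk (Jpow a b c t n) 0 0 * blk (Jminus b c t) 0 0
              - blk (Jminus b c t) 0 0 * blk (Jpow a b c t n) 0 0)) p q) t) ↔
      (∀ z : ℂ, K < ‖z‖ → ∀ t : ℝ, ∀ p q : Fin 2,
        HasDerivAt (fun s => Rfun a b c z s p q)
          ((Rfun a b c z t * (z • (1 : Matrix (Fin 2) (Fin 2) ℂ) - blk (Jmat a b c t) 0 0)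
            - 1
            + (Rfun a b c z t * blk (Jminus b c t) 0 0
              - blk (Jminus b c t) 0 0 * Rfun a b c z t)) p q) t) := by
  have hK1 : 1 ≤ K := one_le_of_norm_Jpow_le hK
  have hJpow : ∀ (p q : Fin 2) m s, ‖blk (Jpow a b c s m) 0 0 p q‖ ≤ 7 * K * K ^ m :=
    fun p q m s => (hK s m _ _).trans (le_mul_of_one_le_left (by positivity) (by linarith))
  have hseries := fun p q => hasDerivAt_coeff_iff_hasDerivAt_tsum_div_pow_succ (by linarith)
    (hJpow p q) (fun m s => norm_blockEvolution_apply_le hK s m p q)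
  constructor
  · intro h z hz t p q
    rw [← tsum_blockEvolution_div_pow_succ hK hz t p q]
    exact (hseries p q).1 (fun m s => h m s p q) z hz t
  · intro h n t p q
    refine (hseries p q).2 (fun z hz s => ?_) n t
    rw [tsum_blockEvolution_div_pow_succ hK hz s p q]
    exact h z hz s p q
end
end
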